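/- If A ≤⋄ B, then A† A = A† A B† B A† A; that is, B† B is a {1}-inverse of the orthogonal projector A† A. -/

import Mathlib

open Matrix

/-- Column space (range) of a complex matrix. -/
noncomputable def mrange {m n : Type*} [Fintype n] (A : Matrix m n ℂ) : Submodule ℂ (m → ℂ) :=
  LinearMap.range A.mulVecLin

/-- The diamond partial order on rectangular complex matrices. -/
def diamondLE {m n : Type*} [Fintype m] [Fintype n] (A B : Matrix m n ℂ) : Prop :=
  mrange A ≤ mrange B ∧ mrange Aᴴ ≤ mrange Bᴴ ∧ A * Bᴴ * A = A * Aᴴ * A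

/-- `X` satisfies the four Penrose equations for `A`. -/
def IsMP {m n : Type*} [Fintype m] [Fintype n] (A : Matrix m n ℂ) (X : Matrix n m ℂ) : Prop :=
  A * X * A = A ∧ X * A * X = X ∧ (A * X)ᴴ = A * X ∧ (X * A)ᴴ = X * A

/-! `B†B` is the orthogonal projector onto `range B*`, so it fixes the columns of `A*`; taking
adjoints, `A B†B = A`. Inserting this into `A†A = A†A A†A` gives the claim. -/

theorem IsMP.mul_mul_conjTranspose {m n : Type*} [Fintype m] [Fintype n] {A : Matrix m n ℂ}
    {X : Matrix n m ℂ} (hX : IsMP A X) : X * A * Aᴴ = Aᴴ := by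
  obtain ⟨hAXA, -, -, hXA⟩ := hX
  rw [← hXA, ← conjTranspose_mul, ← Matrix.mul_assoc, hAXA]

theorem mul_eq_self_of_mrange_le {l m n : Type*} [Fintype l] [Fintype m] [Fintype n]
    {P : Matrix m m ℂ} {C : Matrix m n ℂ} {D : Matrix m l ℂ} (hCD : mrange C ≤ mrange D)
    (hP : P * D = D) : P * C = C := by
  refine ext_iff_mulVec.mpr fun v => ?_
  obtain ⟨w, hw⟩ : C *ᵥ v ∈ mrange D := hCD ⟨v, rfl⟩
  rw [← mulVec_mulVec, ← hw, mulVecLin_apply, mulVec_mulVec, hP]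

theorem IsMP.mul_mul_eq_self_of_mrange_conjTranspose_le {l m n : Type*} [Fintype l] [Fintype m]
    [Fintype n] {A : Matrix l n ℂ} {B : Matrix m n ℂ} {Bd : Matrix n m ℂ} (hB : IsMP B Bd)
    (hAB : mrange Aᴴ ≤ mrange Bᴴ) : A * (Bd * B) = A := by
  have hAH : Bd * B * Aᴴ = Aᴴ := mul_eq_self_of_mrange_le hAB hB.mul_mul_conjTranspose
  have := congrArg conjTranspose hAH
  rwa [conjTranspose_mul, conjTranspose_conjTranspose, hB.2.2.2] at this

theorem stmt7 {m n : ℕ} (A B : Matrix (Fin m) (Fin n) ℂ) (Ad Bd : Matrix (Fin n) (Fin m) ℂ)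
    (hAd : IsMP A Ad) (hBd : IsMP B Bd) (h : diamondLE A B) :
    Ad * A = Ad * A * (Bd * B) * (Ad * A) := by
  have hA : A * (Bd * B) = A := hBd.mul_mul_eq_self_of_mrange_conjTranspose_le h.2.1
  calc Ad * A = Ad * (A * Ad * A) := by rw [hAd.1]
    _ = Ad * (A * (Bd * B)) * (Ad * A) := by rw [hA]; simp only [Matrix.mul_assoc]
    _ = Ad * A * (Bd * B) * (Ad * A) := by simp only [Matrix.mul_assoc]
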